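/- Under the self-supervised model, condition on Y = −1 so that (Z − k₂)/(k₁βσ₁²) ∼ χ²_d. If the threshold satisfies b ≤ dk₁(β+1)σ₁²/2 + k₂ + δ·dk₁(β+1)σ₁²/2 for some δ ∈ (0, (β−1)/(β+1)), then P(Z < b | Y=−1) ≤ exp(−d(β−1−δ(β+1))²/(32β²)). -/

import Mathlib

/-! Chernoff bound for the lower tail of `χ²_d`: its moment generating function is
`(1 - 2λ)^(-d/2)`, and at `λ = -t / (2(1 - t))` the bound `e^(-λ d (1 - t)) (1 - 2λ)^(-d/2)`
equals `exp (d (t + log (1 - t)) / 2) ≤ exp (-d t² / 4)`. After standardizing `Z`, the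
threshold `b` lies below `d (1 - t)` for `t = (β - 1 - δ(β + 1)) / (2β)`. -/

open MeasureTheory ProbabilityTheory Real

/-- The chi-squared distribution with `d` degrees of freedom, realized as the law of the
sum of `d` squared i.i.d. standard normals. -/
noncomputable def chiSq (d : ℕ) : Measure ℝ :=
  Measure.map (fun w : Fin d → ℝ => ∑ i, (w i) ^ 2)
    (Measure.pi fun _ : Fin d => gaussianReal 0 1)

lemma add_sq_div_two_le_neg_log_one_sub {t : ℝ} (h0 : 0 ≤ t) (h1 : t < 1) :
    t + t ^ 2 / 2 ≤ -log (1 - t) := by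
  have h := sum_le_hasSum (Finset.range 2) (fun n _ => by positivity)
    (hasSum_pow_div_log_of_abs_lt_one (abs_lt.2 ⟨by linarith, h1⟩))
  norm_num [Finset.sum_range_succ] at h
  linarith

lemma measurable_sum_sq (d : ℕ) : Measurable fun w : Fin d → ℝ => ∑ i, w i ^ 2 := by
  fun_prop

instance (d : ℕ) : IsProbabilityMeasure (chiSq d) :=
  Measure.isProbabilityMeasure_map (measurable_sum_sq d).aemeasurable

lemma integral_exp_mul_sq_gaussianReal {t : ℝ} (ht : t < 1 / 2) :
    ∫ x, exp (t * x ^ 2) ∂gaussianReal 0 1 = (√(1 - 2 * t))⁻¹ := by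
  have hpdf : ∀ x : ℝ, gaussianPDFReal 0 1 x • exp (t * x ^ 2)
      = (√(2 * π))⁻¹ * exp (-(1 / 2 - t) * x ^ 2) := by
    intro x
    rw [smul_eq_mul, gaussianPDFReal, mul_assoc, ← exp_add]
    congr 2
    · simp
    · simp only [NNReal.coe_one, sub_zero]; ring
  simp_rw [integral_gaussianReal_eq_integral_smul one_ne_zero, hpdf, integral_const_mul,
    integral_gaussian]
  rw [← sqrt_inv, ← sqrt_inv, ← sqrt_mul (by positivity)]
  congr 1
  have : (1 : ℝ) - 2 * t ≠ 0 := by linarith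
  field_simp

lemma mgf_chiSq (d : ℕ) {t : ℝ} (ht : t < 1 / 2) :
    mgf id (chiSq d) t = (√(1 - 2 * t))⁻¹ ^ d := by
  have hprod : ∀ w : Fin d → ℝ, exp (t * ∑ i, w i ^ 2) = ∏ i, exp (t * w i ^ 2) := by
    intro w
    rw [Finset.mul_sum, exp_sum]
  rw [mgf, chiSq, integral_map (measurable_sum_sq d).aemeasurable (by fun_prop)]
  simp only [id, hprod]
  rw [integral_fintype_prod_eq_pow (fun x => exp (t * x ^ 2)), Fintype.card_fin,
    integral_exp_mul_sq_gaussianReal ht]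

lemma chiSq_real_Iic_mul_one_sub_le (d : ℕ) {t : ℝ} (h0 : 0 ≤ t) (h1 : t < 1) :
    (chiSq d).real (Set.Iic (d * (1 - t))) ≤ exp (-d * t ^ 2 / 4) := by
  set s := -t / (2 * (1 - t)) with hs_def
  have h1t : 0 < 1 - t := by linarith
  have hs : s ≤ 0 := div_nonpos_of_nonpos_of_nonneg (by linarith) (by linarith)
  have hmgf := mgf_chiSq d (t := s) (by linarith)
  have hint : Integrable (fun y => exp (s * y)) (chiSq d) :=
    (mgf_pos_iff (X := id)).1 (hmgf ▸ pow_pos (inv_pos.2 (sqrt_pos.2 (by linarith))) d)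
  have hsqrt : (√(1 - 2 * s))⁻¹ = exp (log (1 - t) / 2) := by
    rw [show 1 - 2 * s = (1 - t)⁻¹ by rw [hs_def]; field_simp; ring, sqrt_inv, inv_inv,
      sqrt_eq_rpow, rpow_def_of_pos h1t, mul_one_div]
  calc (chiSq d).real (Set.Iic (d * (1 - t)))
      ≤ exp (-s * (d * (1 - t))) * mgf id (chiSq d) s :=
        measure_le_le_exp_mul_mgf (X := id) _ hs hint
    _ = exp (d * (t + log (1 - t)) / 2) := by
        rw [hmgf, hsqrt, ← exp_nat_mul, ← exp_add]
        congr 1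
        rw [hs_def]
        field_simp
    _ ≤ exp (-d * t ^ 2 / 4) := by
        refine exp_le_exp.2 ?_
        nlinarith [add_sq_div_two_le_neg_log_one_sub h0 h1, (Nat.cast_nonneg d : (0 : ℝ) ≤ d)]

lemma measure_setOf_lt_eq_of_map_sub_div {Ω : Type*} [MeasurableSpace Ω] {P : Measure Ω}
    {ν : Measure ℝ} [NeZero ν] {Z : Ω → ℝ} {a c : ℝ} (hc : 0 < c)
    (hZ : P.map (fun ω => (Z ω - a) / c) = ν) (b : ℝ) :
    P {ω | Z ω < b} = ν (Set.Iio ((b - a) / c)) := by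
  have hmeas : AEMeasurable (fun ω => (Z ω - a) / c) P :=
    .of_map_ne_zero (hZ ▸ NeZero.ne ν)
  rw [← hZ, Measure.map_apply_of_aemeasurable hmeas measurableSet_Iio]
  congr 1
  ext ω
  simp [div_lt_div_iff_of_pos_right hc]

theorem negative_class_error_bound_general
    {Ω : Type*} [MeasureSpace Ω]
    (d : ℕ) (k₁ k₂ σ₁ β δ b : ℝ)
    (hk₁ : 0 < k₁) (hσ : 0 < σ₁) (hβ : 3 < β)
    (hδ : 0 < δ) (hδ' : δ < (β - 1) / (β + 1))
    (Z : Ω → ℝ)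
    (hZ : Measure.map (fun ω => (Z ω - k₂) / (k₁ * β * σ₁ ^ 2)) ℙ = chiSq d)
    (hb : b ≤ d * k₁ * (β + 1) * σ₁ ^ 2 / 2 + k₂ + δ * (d * k₁ * (β + 1) * σ₁ ^ 2) / 2) :
    (ℙ {ω | Z ω < b}).toReal ≤ Real.exp (-d * (β - 1 - δ * (β + 1)) ^ 2 / (32 * β ^ 2)) := by
  have hc : 0 < k₁ * β * σ₁ ^ 2 := by positivity
  set t := (β - 1 - δ * (β + 1)) / (2 * β) with ht_def
  have ht0 : 0 ≤ t := div_nonneg (by linarith [(lt_div_iff₀ (by linarith)).1 hδ']) (by linarith)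
  have ht1 : t < 1 := (div_lt_one (by linarith)).2 (by nlinarith)
  have hthreshold : (b - k₂) / (k₁ * β * σ₁ ^ 2) ≤ d * (1 - t) := by
    rw [div_le_iff₀ hc, ht_def]
    field_simp
    linarith
  calc (ℙ {ω | Z ω < b}).toReal
      = (chiSq d).real (Set.Iio ((b - k₂) / (k₁ * β * σ₁ ^ 2))) := by
        rw [measure_setOf_lt_eq_of_map_sub_div hc hZ, measureReal_def]
    _ ≤ (chiSq d).real (Set.Iic (d * (1 - t))) :=
        measureReal_mono (Set.Iio_subset_Iic_iff.2 hthreshold)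
    _ ≤ exp (-d * t ^ 2 / 4) := chiSq_real_Iic_mul_one_sub_le d ht0 ht1
    _ ≤ exp (-d * (β - 1 - δ * (β + 1)) ^ 2 / (32 * β ^ 2)) := by
        refine exp_le_exp.2 ?_
        rw [ht_def]
        field_simp
        nlinarith [sq_nonneg (β - 1 - δ * (β + 1)), (Nat.cast_nonneg d : (0 : ℝ) ≤ d)]

theorem negative_class_error_bound
    {Ω : Type*} [MeasureSpace Ω] [IsProbabilityMeasure (ℙ : Measure Ω)]
    (d : ℕ) (hd : 1 ≤ d) (k₁ k₂ σ₁ β δ b : ℝ)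
    (hk₁ : 0 < k₁) (hk₂ : 0 < k₂) (hσ : 0 < σ₁) (hβ : 3 < β)
    (hδ : 0 < δ) (hδ' : δ < (β - 1) / (β + 1))
    (Z : Ω → ℝ)
    (hZ : Measure.map (fun ω => (Z ω - k₂) / (k₁ * β * σ₁ ^ 2)) ℙ = chiSq d)
    (hb : b ≤ d * k₁ * (β + 1) * σ₁ ^ 2 / 2 + k₂ + δ * (d * k₁ * (β + 1) * σ₁ ^ 2) / 2) :
    (ℙ {ω | Z ω < b}).toReal ≤ Real.exp (-d * (β - 1 - δ * (β + 1)) ^ 2 / (32 * β ^ 2)) :=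
  negative_class_error_bound_general d k₁ k₂ σ₁ β δ b hk₁ hσ hβ hδ hδ' Z hZ hb
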